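/- arXiv:math-ph/0304017 — 7 statements merged into one kernel-verified Lean document; each statement's English description precedes it below -/
import Mathlib

section
/- Let A be a positive self-adjoint operator on a Hilbert space H and J : H → K a bounded operator into a Hilbert space K such that J*A^{-1}J is invertible. Then J*J (J* A^{-1} J)^{-1} J*J ≤ J* A J as quadratic forms. -/
/-!
Put `R := J - A⁻¹ J (J* A⁻¹ J)⁻¹ J* J`. Expanding `R* A R`, each of the two cross terms and the
quadratic term collapse to `J* J (J* A⁻¹ J)⁻¹ J* J`, so `J* A J - J* J (J* A⁻¹ J)⁻¹ J* J = R* A R`,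
which is positive because `A` is. A one-sided inverse of a self-adjoint operator is self-adjoint
and two-sided, so `A⁻¹` and `(J* A⁻¹ J)⁻¹` are self-adjoint, as the expansion requires.
-/

open ContinuousLinearMap

open scoped InnerProduct

namespace IsSelfAdjoint

variable {R : Type*} [Monoid R] [StarMul R] {a b : R}

theorem of_mul_eq_one (ha : IsSelfAdjoint a) (h : a * b = 1) : IsSelfAdjoint b :=
  left_inv_eq_right_inv (by rw [← ha.star_eq, ← star_mul, h, star_one]) h

theorem mul_eq_one_of_mul_eq_one (ha : IsSelfAdjoint a) (h : a * b = 1) : b * a = 1 := by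
  rw [← (ha.of_mul_eq_one h).star_eq, ← ha.star_eq, ← star_mul, h, star_one]

end IsSelfAdjoint

namespace ContinuousLinearMap

variable {𝕜 H K : Type*} [RCLike 𝕜]
  [NormedAddCommGroup H] [InnerProductSpace 𝕜 H] [CompleteSpace H]
  [NormedAddCommGroup K] [InnerProductSpace 𝕜 K] [CompleteSpace K]

theorem adjoint_comp_comp_sub_eq_adjoint_conj {A B : K →L[𝕜] K} {J : H →L[𝕜] K}
    {C : H →L[𝕜] H} (hB : IsSelfAdjoint B) (hC : IsSelfAdjoint C)
    (hAB : A ∘L B = 1) (hBA : B ∘L A = 1) (hC1 : (J† ∘L B ∘L J) ∘L C = 1) :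
    J† ∘L A ∘L J - (J† ∘L J) ∘L C ∘L (J† ∘L J)
      = (J - B ∘L J ∘L C ∘L J† ∘L J)† ∘L A ∘L (J - B ∘L J ∘L C ∘L J† ∘L J) := by
  have hAB' (y : K) : A (B y) = y := congr($hAB y)
  have hBA' (y : K) : B (A y) = y := congr($hBA y)
  have hC1' (x : H) : (J†) (B (J (C x))) = x := congr($hC1 x)
  ext x
  simp [adjoint_comp, hB.adjoint_eq, hC.adjoint_eq, hAB', hBA', hC1']

end ContinuousLinearMap

theorem stmt0_general {H K : Type*}
    [NormedAddCommGroup H] [InnerProductSpace ℂ H] [CompleteSpace H]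
    [NormedAddCommGroup K] [InnerProductSpace ℂ K] [CompleteSpace K]
    (A B : K →L[ℂ] K) (J : H →L[ℂ] K) (C : H →L[ℂ] H)
    (hA : A.IsPositive)
    (hAB : A ∘L B = 1)
    (hC1 : ((adjoint J) ∘L B ∘L J) ∘L C = 1) :
    ((adjoint J) ∘L A ∘L J
      - ((adjoint J) ∘L J) ∘L C ∘L ((adjoint J) ∘L J)).IsPositive := by
  have hB : IsSelfAdjoint B := hA.isSelfAdjoint.of_mul_eq_one hAB
  have hC : IsSelfAdjoint C := (hB.adjoint_conj J).of_mul_eq_one hC1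
  have hBA : B ∘L A = 1 := hA.isSelfAdjoint.mul_eq_one_of_mul_eq_one hAB
  rw [adjoint_comp_comp_sub_eq_adjoint_conj hB hC hAB hBA hC1]
  exact hA.adjoint_conj _

/-- If `A` is a positive invertible self-adjoint operator on a Hilbert
space `K` (with inverse `B`), `J : H → K` is bounded, and `J* A⁻¹ J` is invertible (with
inverse `C`), then `J*J (J* A⁻¹ J)⁻¹ J*J ≤ J* A J` as quadratic forms. -/
theorem stmt0 {H K : Type*}
    [NormedAddCommGroup H] [InnerProductSpace ℂ H] [CompleteSpace H]
    [NormedAddCommGroup K] [InnerProductSpace ℂ K] [CompleteSpace K]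
    (A B : K →L[ℂ] K) (J : H →L[ℂ] K) (C : H →L[ℂ] H)
    (hA : A.IsPositive)
    (hAB : A ∘L B = 1) (hBA : B ∘L A = 1)
    (hC1 : ((adjoint J) ∘L B ∘L J) ∘L C = 1)
    (hC2 : C ∘L ((adjoint J) ∘L B ∘L J) = 1) :
    ((adjoint J) ∘L A ∘L J
      - ((adjoint J) ∘L J) ∘L C ∘L ((adjoint J) ∘L J)).IsPositive :=
  stmt0_general A B J C hA hAB hC1
end

section
/- Let X and Y be self-adjoint operators on a Hilbert space with X ≥ 0, X + Y ≥ 0 and ‖Y‖ ≤ M for some M > 0. Then (X + Y + 2M)^{-2} ≤ 4 (X + M)^{-2} ≤ 4 (X² + M²)^{-1} as operator inequalities. -/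
/-!
Write `A = X + Y + 2M` and `B = X + M`. Since `X + Y ≥ 0`, `re ⟪A x, x⟫ ≥ 2M‖x‖²`, hence
`‖A x‖ ≥ 2M‖x‖`; as `B = A - Y - M` and `‖Y‖ ≤ M`, this gives `‖B x‖ ≤ ‖A x‖ + 2M‖x‖ ≤ 2‖A x‖`,
that is `B² ≤ 4A²`. On the other hand `B² = X² + M² + 2MX ≥ X² + M²`. Inversion is operator
antitone on positive invertible elements of a C⋆-algebra, which turns these two inequalities into
the claimed ones.
-/

open ContinuousLinearMap
open scoped ComplexOrder

section OrderedAlgebra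

variable {𝕜 A : Type*} [RCLike 𝕜] [Ring A] [PartialOrder A] [StarRing A] [StarOrderedRing A]
  [Algebra 𝕜 A] [StarModule 𝕜 A]

lemma add_ofReal_smul_one_nonneg {a : A} (ha : 0 ≤ a) {c : ℝ} (hc : 0 ≤ c) :
    0 ≤ a + (c : 𝕜) • 1 :=
  add_nonneg ha (smul_nonneg (RCLike.ofReal_nonneg.2 hc) zero_le_one)

lemma mul_self_add_sq_smul_one_le {a : A} (ha : 0 ≤ a) {M : ℝ} (hM : 0 ≤ M) :
    a * a + ((M ^ 2 : ℝ) : 𝕜) • 1 ≤ (a + (M : 𝕜) • 1) * (a + (M : 𝕜) • 1) := by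
  have hsq : (a + (M : 𝕜) • 1) * (a + (M : 𝕜) • 1)
      = a * a + ((M ^ 2 : ℝ) : 𝕜) • 1 + ((2 * M : ℝ) : 𝕜) • a := by
    simp only [mul_add, add_mul, mul_smul_comm, smul_mul_assoc, one_mul, mul_one]
    push_cast
    module
  rw [hsq]
  exact le_add_of_nonneg_right (smul_nonneg (RCLike.ofReal_nonneg.2 (by positivity)) ha)

end OrderedAlgebra

namespace CStarAlgebra

variable {A : Type*} [CStarAlgebra A] [PartialOrder A] [StarOrderedRing A]

lemma inv_le_smul_inv {a b : Aˣ} {c : ℂ} (hc : 0 < c) (ha : 0 ≤ (a : A))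
    (hab : (a : A) ≤ c • (b : A)) : (↑b⁻¹ : A) ≤ c • (↑a⁻¹ : A) := by
  have h : c⁻¹ • (↑b⁻¹ : A) ≤ ↑a⁻¹ := by
    simpa [Units.smul_def] using CStarAlgebra.inv_le_inv (b := Units.mk0 c hc.ne' • b) ha
      (by simpa [Units.smul_def] using hab)
  calc (↑b⁻¹ : A) = c • c⁻¹ • (↑b⁻¹ : A) := by rw [smul_inv_smul₀ hc.ne']
    _ ≤ c • (↑a⁻¹ : A) := smul_le_smul_of_nonneg_left h hc.le

end CStarAlgebra

namespace ContinuousLinearMap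

variable {𝕜 E : Type*} [RCLike 𝕜] [NormedAddCommGroup E] [InnerProductSpace 𝕜 E]

lemma mul_norm_le_norm_apply_of_smul_one_le {T : E →L[𝕜] E} {c : ℝ} (hT : (c : 𝕜) • 1 ≤ T)
    (x : E) : c * ‖x‖ ≤ ‖T x‖ := by
  rcases eq_or_ne x 0 with rfl | hx
  · simp
  have hinner : c * ‖x‖ ^ 2 ≤ RCLike.re (inner 𝕜 (T x) x) := by
    have h := hT.re_inner_nonneg_left x
    simp only [sub_apply, smul_apply, one_apply_eq_self, inner_sub_left, inner_smul_left,
      RCLike.conj_ofReal, map_sub] at h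
    norm_cast at h
    simpa using h
  refine le_of_mul_le_mul_right ?_ (norm_pos_iff.2 hx)
  calc c * ‖x‖ * ‖x‖ = c * ‖x‖ ^ 2 := by ring
    _ ≤ RCLike.re (inner 𝕜 (T x) x) := hinner
    _ ≤ ‖T x‖ * ‖x‖ := re_inner_le_norm _ _

lemma norm_add_smul_one_apply_le_two_mul {X Y : E →L[𝕜] E} {M : ℝ} (hXY : (X + Y).IsPositive)
    (hY : ‖Y‖ ≤ M) (x : E) :
    ‖(X + (M : 𝕜) • 1) x‖ ≤ 2 * ‖(X + Y + ((2 * M : ℝ) : 𝕜) • 1) x‖ := by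
  set A := X + Y + ((2 * M : ℝ) : 𝕜) • 1
  have hM : 0 ≤ M := (norm_nonneg Y).trans hY
  have hA : 2 * M * ‖x‖ ≤ ‖A x‖ :=
    mul_norm_le_norm_apply_of_smul_one_le (by simpa [A, le_def] using hXY) x
  have hB : (X + (M : 𝕜) • 1) x = A x - Y x - (M : 𝕜) • x := by
    simp only [A, add_apply, smul_apply, one_apply_eq_self]
    push_cast
    module
  calc ‖(X + (M : 𝕜) • 1) x‖ ≤ ‖A x‖ + ‖Y x‖ + ‖(M : 𝕜) • x‖ := by
        rw [hB]; exact norm_sub_le_of_le (norm_sub_le _ _) le_rfl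
    _ ≤ ‖A x‖ + M * ‖x‖ + M * ‖x‖ := by
        gcongr
        · exact Y.le_of_opNorm_le hY x
        · rw [norm_smul, RCLike.norm_ofReal, abs_of_nonneg hM]
    _ ≤ 2 * ‖A x‖ := by linarith

variable [CompleteSpace E]

lemma star_mul_self_le_star_mul_self_of_norm_apply_le {S T : E →L[𝕜] E} (h : ∀ x, ‖S x‖ ≤ ‖T x‖) :
    star S * S ≤ star T * T := by
  have hnorm (U : E →L[𝕜] E) (x : E) : RCLike.re (inner 𝕜 ((star U * U) x) x) = ‖U x‖ ^ 2 := by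
    rw [star_eq_adjoint, apply_norm_sq_eq_inner_adjoint_left, mul_def]
  refine ⟨((IsSelfAdjoint.star_mul_self T).sub (IsSelfAdjoint.star_mul_self S)).isSymmetric,
    fun x => ?_⟩
  rw [reApplyInnerSelf_apply, sub_apply, inner_sub_left, map_sub, hnorm, hnorm, sub_nonneg]
  exact pow_le_pow_left₀ (norm_nonneg _) (h x) 2

lemma add_smul_one_mul_self_le {X Y : E →L[𝕜] E} {M : ℝ} (hX : X.IsPositive)
    (hXY : (X + Y).IsPositive) (hY : ‖Y‖ ≤ M) :
    (X + (M : 𝕜) • 1) * (X + (M : 𝕜) • 1)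
      ≤ (4 : 𝕜) • ((X + Y + ((2 * M : ℝ) : 𝕜) • 1) * (X + Y + ((2 * M : ℝ) : 𝕜) • 1)) := by
  have hB : IsSelfAdjoint (X + (M : 𝕜) • 1) :=
    hX.isSelfAdjoint.add (IsSelfAdjoint.smul (RCLike.conj_ofReal M) (.one _))
  have hA : IsSelfAdjoint (X + Y + ((2 * M : ℝ) : 𝕜) • 1) :=
    hXY.isSelfAdjoint.add (IsSelfAdjoint.smul (RCLike.conj_ofReal _) (.one _))
  have h := star_mul_self_le_star_mul_self_of_norm_apply_le (S := X + (M : 𝕜) • 1)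
    (T := (2 : 𝕜) • (X + Y + ((2 * M : ℝ) : 𝕜) • 1)) fun x => by
      rw [smul_apply, norm_smul, RCLike.norm_ofNat]
      exact norm_add_smul_one_apply_le_two_mul hXY hY x
  rwa [star_smul, hA.star_eq, hB.star_eq, star_ofNat, smul_mul_smul,
    show (2 : 𝕜) * 2 = 4 by norm_num] at h

end ContinuousLinearMap

theorem stmt1_general {H : Type*} [NormedAddCommGroup H] [InnerProductSpace ℂ H] [CompleteSpace H]
    (X Y R1 R2 R3 : H →L[ℂ] H) (M : ℝ)
    (hX : X.IsPositive) (hXY : (X + Y).IsPositive) (hY : ‖Y‖ ≤ M)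
    (hR1 : (X + Y + ((2 * M : ℝ) : ℂ) • 1) ∘L R1 = 1)
    (hR1' : R1 ∘L (X + Y + ((2 * M : ℝ) : ℂ) • 1) = 1)
    (hR2 : (X + ((M : ℝ) : ℂ) • 1) ∘L R2 = 1)
    (hR2' : R2 ∘L (X + ((M : ℝ) : ℂ) • 1) = 1)
    (hR3 : (X ∘L X + ((M ^ 2 : ℝ) : ℂ) • 1) ∘L R3 = 1)
    (hR3' : R3 ∘L (X ∘L X + ((M ^ 2 : ℝ) : ℂ) • 1) = 1) :
    (((4 : ℂ) • (R2 ∘L R2)) - R1 ∘L R1).IsPositive ∧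
      (((4 : ℂ) • R3) - (4 : ℂ) • (R2 ∘L R2)).IsPositive := by
  simp only [← mul_def] at hR1 hR1' hR2 hR2' hR3 hR3' ⊢
  rw [← le_def, ← le_def]
  have hM : 0 ≤ M := (norm_nonneg Y).trans hY
  have hX0 : 0 ≤ X := (nonneg_iff_isPositive X).2 hX
  have hB0 : 0 ≤ X + (M : ℂ) • 1 := add_ofReal_smul_one_nonneg hX0 hM
  have hC0 : 0 ≤ X * X + ((M ^ 2 : ℝ) : ℂ) • 1 :=
    add_ofReal_smul_one_nonneg hX.isSelfAdjoint.mul_self_nonneg (sq_nonneg M)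
  let uA : (H →L[ℂ] H)ˣ := ⟨_, R1, hR1, hR1'⟩
  let uB : (H →L[ℂ] H)ˣ := ⟨_, R2, hR2, hR2'⟩
  let uC : (H →L[ℂ] H)ˣ := ⟨_, R3, hR3, hR3'⟩
  constructor
  · simpa [uA, uB, mul_inv_rev] using CStarAlgebra.inv_le_smul_inv (a := uB * uB) (b := uA * uA)
      (by norm_num) (IsSelfAdjoint.of_nonneg hB0).mul_self_nonneg
      (add_smul_one_mul_self_le hX hXY hY)
  · simpa [uB, uC, mul_inv_rev] using smul_le_smul_of_nonneg_left
      (CStarAlgebra.inv_le_inv (a := uC) (b := uB * uB) hC0 (mul_self_add_sq_smul_one_le hX0 hM))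
      (by norm_num : (0 : ℂ) ≤ 4)

/-- If `X, Y` are self-adjoint, `X ≥ 0`, `X + Y ≥ 0` and `‖Y‖ ≤ M`,
then `(X + Y + 2M)⁻² ≤ 4 (X + M)⁻² ≤ 4 (X² + M²)⁻¹`, where `R1, R2, R3` denote the
respective (two-sided) inverses. -/
theorem stmt1 {H : Type*} [NormedAddCommGroup H] [InnerProductSpace ℂ H] [CompleteSpace H]
    (X Y R1 R2 R3 : H →L[ℂ] H) (M : ℝ) (hM : 0 < M)
    (hXsa : IsSelfAdjoint X) (hYsa : IsSelfAdjoint Y)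
    (hX : X.IsPositive) (hXY : (X + Y).IsPositive) (hY : ‖Y‖ ≤ M)
    (hR1 : (X + Y + ((2 * M : ℝ) : ℂ) • 1) ∘L R1 = 1)
    (hR1' : R1 ∘L (X + Y + ((2 * M : ℝ) : ℂ) • 1) = 1)
    (hR2 : (X + ((M : ℝ) : ℂ) • 1) ∘L R2 = 1)
    (hR2' : R2 ∘L (X + ((M : ℝ) : ℂ) • 1) = 1)
    (hR3 : (X ∘L X + ((M ^ 2 : ℝ) : ℂ) • 1) ∘L R3 = 1)
    (hR3' : R3 ∘L (X ∘L X + ((M ^ 2 : ℝ) : ℂ) • 1) = 1) :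
    (((4 : ℂ) • (R2 ∘L R2)) - R1 ∘L R1).IsPositive ∧
      (((4 : ℂ) • R3) - (4 : ℂ) • (R2 ∘L R2)).IsPositive :=
  stmt1_general X Y R1 R2 R3 M hX hXY hY hR1 hR1' hR2 hR2' hR3 hR3'
end

section
/- For nonnegative compact self-adjoint operators X₁, X₂ on a Hilbert space and positive reals e₁, e₂, the number of eigenvalues of X₁ + X₂ that are ≥ e₁ + e₂ is at most the number of eigenvalues of X₁ that are ≥ e₁ plus the number of eigenvalues of X₂ that are ≥ e₂. -/
/-!
Write `V(X, e)` for the span of the eigenvectors of `X` with eigenvalue `≥ e`; as eigenspaces are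
independent, `n(X, e)` is the dimension of `V(X, e)`. Let `X` be compact and positive and `e > 0`.
On `V(X, e)` the quadratic form `re ⟪X v, v⟫` is `≥ e ‖v‖²`, so `X` is bounded below on the closure
of `V(X, e)`, which is therefore finite-dimensional. On `V(X, e)ᗮ` it is `< e ‖v‖²` for `v ≠ 0`:
the restriction of `X` to this invariant subspace is compact and positive, so its norm is one of
its eigenvalues, hence `< e`. Adding the strict bounds for `X₁` and `X₂`, no nonzero vector of
`V(X₁ + X₂, e₁ + e₂)` is orthogonal to `V(X₁, e₁) ⊔ V(X₂, e₂)`, so the orthogonal projection onto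
this finite-dimensional space is injective on `V(X₁ + X₂, e₁ + e₂)`.
-/

open ContinuousLinearMap

/-- The number of eigenvalues `≥ μ` of an operator, counted with multiplicity
(as a cardinal): the sum of the dimensions of the eigenspaces belonging to
real eigenvalues `r ≥ μ`. -/
noncomputable def eigCount {H : Type*} [NormedAddCommGroup H] [InnerProductSpace ℂ H]
    (A : H →L[ℂ] H) (μ : ℝ) : Cardinal :=
  Cardinal.sum fun r : {r : ℝ // μ ≤ r} =>
    Module.rank ℂ (Module.End.eigenspace (A : H →ₗ[ℂ] H) ((r : ℝ) : ℂ))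

open Module.End RCLike
open scoped InnerProductSpace

universe u v w

theorem Submodule.rank_le_of_disjoint_of_isCompl {R M : Type*} [Ring R] [AddCommGroup M]
    [Module R M] {W U K : Submodule R M} (hW : Disjoint W K) (hUK : IsCompl U K) :
    Module.rank R W ≤ Module.rank R U :=
  LinearMap.rank_le_of_injective ((Submodule.projectionOnto U K hUK).domRestrict W) <|
    LinearMap.injective_domRestrict_iff.mpr <| by rwa [Submodule.ker_projectionOnto]

theorem iSupIndep.lift_rank_iSup {K : Type u} {V : Type v} {ι : Type w} [DivisionRing K]
    [AddCommGroup V] [Module K V] {p : ι → Submodule K V} (hp : iSupIndep p) :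
    Cardinal.lift.{w} (Module.rank K ↥(⨆ i, p i)) = Cardinal.sum fun i => Module.rank K (p i) := by
  classical
  have h := lift_rank_range_of_injective _ hp.dfinsupp_lsum_injective
  rw [Cardinal.lift_umax.{v, w}, Cardinal.lift_id'.{v, w}] at h
  rw [Submodule.iSup_eq_range_dfinsupp_lsum, h]
  exact rank_directSum K fun i => p i

section eigenspanGE

variable {𝕜 E : Type*} [RCLike 𝕜] [NormedAddCommGroup E] [InnerProductSpace 𝕜 E]

def Module.End.eigenspanGE (T : Module.End 𝕜 E) (e : ℝ) : Submodule 𝕜 E :=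
  ⨆ r : {r : ℝ // e ≤ r}, T.eigenspace (r : 𝕜)

theorem Module.End.eigenspanGE_mem_invtSubmodule (T : Module.End 𝕜 E) (e : ℝ) :
    T.eigenspanGE e ∈ T.invtSubmodule := by
  rw [mem_invtSubmodule_iff_map_le, eigenspanGE, Submodule.map_iSup]
  exact iSup_mono fun r => (mem_invtSubmodule_iff_map_le T).mp (eigenspace_mem_invtSubmodule T _)

theorem LinearMap.IsSymmetric.mul_sq_norm_le_re_inner_of_mem_eigenspanGE {T : Module.End 𝕜 E}
    (hT : T.IsSymmetric) {e : ℝ} {v : E} (hv : v ∈ T.eigenspanGE e) :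
    e * ‖v‖ ^ 2 ≤ re ⟪T v, v⟫_𝕜 := by
  classical
  let p : {r : ℝ // e ≤ r} → Submodule 𝕜 E := fun r => T.eigenspace (r : 𝕜)
  have hp : OrthogonalFamily 𝕜 (fun r => p r) (fun r => (p r).subtypeₗᵢ) :=
    hT.orthogonalFamily_eigenspaces.comp fun r s h => Subtype.ext (by exact_mod_cast h)
  obtain ⟨f, rfl⟩ := (Submodule.mem_iSup_iff_exists_dfinsupp' p v).mp hv
  have hTf : ∀ r, T ((p r).subtypeₗᵢ (f r)) = (p r).subtypeₗᵢ (((r : ℝ) : 𝕜) • f r) :=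
    fun r => mem_eigenspace_iff.mp (f r).2
  have hsum : (f.sum fun r x => (x : E)) = ∑ r ∈ f.support, (p r).subtypeₗᵢ (f r) := rfl
  rw [← inner_self_eq_norm_sq (𝕜 := 𝕜), hsum, map_sum, Finset.sum_congr rfl fun r _ => hTf r,
    hp.inner_sum, hp.inner_sum, map_sum, map_sum, Finset.mul_sum]
  refine Finset.sum_le_sum fun r _ => ?_
  rw [Submodule.coe_inner, Submodule.coe_inner, Submodule.coe_smul, inner_smul_left, conj_ofReal,
    re_ofReal_mul]
  exact mul_le_mul_of_nonneg_right r.2 inner_self_nonneg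

theorem LinearMap.IsSymmetric.mul_norm_le_norm_apply_of_mem_eigenspanGE {T : Module.End 𝕜 E}
    (hT : T.IsSymmetric) {e : ℝ} {v : E} (hv : v ∈ T.eigenspanGE e) :
    e * ‖v‖ ≤ ‖T v‖ := by
  rcases (norm_nonneg v).eq_or_lt with hv0 | hv0
  · simp [← hv0]
  refine le_of_mul_le_mul_right ?_ hv0
  calc e * ‖v‖ * ‖v‖ = e * ‖v‖ ^ 2 := by ring
    _ ≤ re ⟪T v, v⟫_𝕜 := hT.mul_sq_norm_le_re_inner_of_mem_eigenspanGE hv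
    _ ≤ ‖T v‖ * ‖v‖ := re_inner_le_norm _ _

theorem FiniteDimensional.of_isCompactOperator_of_antilipschitz {𝕜 E F : Type*}
    [NontriviallyNormedField 𝕜] [CompleteSpace 𝕜] [NormedAddCommGroup E] [NormedSpace 𝕜 E]
    [CompleteSpace E] [NormedAddCommGroup F] [NormedSpace 𝕜 F] {f : E →L[𝕜] F} {K : NNReal}
    (hc : IsCompactOperator f) (hf : AntilipschitzWith K f) : FiniteDimensional 𝕜 E := by
  obtain ⟨C, hC, hfC⟩ := hc.image_closedBall_subset_compact 1
  refine .of_isCompact_closedBall₀ 𝕜 one_pos <|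
    ((hf.isClosedEmbedding f.uniformContinuous).isCompact_preimage hC).of_isClosed_subset
      Metric.isClosed_closedBall fun x hx => hfC ⟨x, hx, rfl⟩

theorem IsCompactOperator.finiteDimensional_eigenspanGE [CompleteSpace E] {T : E →L[𝕜] E}
    (hc : IsCompactOperator T) (hT : T.IsSymmetric) {e : ℝ} (he : 0 < e) :
    FiniteDimensional 𝕜 (eigenspanGE (T : Module.End 𝕜 E) e) := by
  set V := eigenspanGE (T : Module.End 𝕜 E) e
  have hbound : ∀ v ∈ V.topologicalClosure, e * ‖v‖ ≤ ‖T v‖ :=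
    closure_minimal (t := {v | e * ‖v‖ ≤ ‖T v‖})
      (fun w hw => hT.mul_norm_le_norm_apply_of_mem_eigenspanGE hw)
      (isClosed_le (by fun_prop) (by fun_prop))
  have : CompleteSpace V.topologicalClosure := V.isClosed_topologicalClosure.completeSpace_coe
  have : FiniteDimensional 𝕜 V.topologicalClosure :=
    .of_isCompactOperator_of_antilipschitz (hc.comp_clm V.topologicalClosure.subtypeL)
      (K := ⟨e⁻¹, by positivity⟩) ((T.comp V.topologicalClosure.subtypeL).antilipschitz_of_bound
        fun v => (le_inv_mul_iff₀ he).mpr (hbound v v.2))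
  exact Submodule.finiteDimensional_of_le V.le_topologicalClosure

end eigenspanGE

theorem eigCount_eq_rank_eigenspanGE {H : Type*} [NormedAddCommGroup H]
    [InnerProductSpace ℂ H] (A : H →L[ℂ] H) (μ : ℝ) :
    eigCount A μ = Module.rank ℂ (eigenspanGE (A : H →ₗ[ℂ] H) μ) := by
  have hind : iSupIndep fun r : {r : ℝ // μ ≤ r} => eigenspace (A : H →ₗ[ℂ] H) ((r : ℝ) : ℂ) :=
    (eigenspaces_iSupIndep (A : H →ₗ[ℂ] H)).comp fun r s h => Subtype.ext (by exact_mod_cast h)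
  rw [← Cardinal.lift_uzero (Module.rank ℂ _)]
  exact hind.lift_rank_iSup.symm

section Positive

variable {H : Type*} [NormedAddCommGroup H] [InnerProductSpace ℂ H] [CompleteSpace H]

theorem IsCompactOperator.hasEigenvalue_norm_of_isPositive {T : H →L[ℂ] H}
    (hc : IsCompactOperator T) (hT : T.IsPositive) (h0 : T ≠ 0) :
    HasEigenvalue (T : Module.End ℂ H) (‖T‖ : ℂ) := by
  have : Nontrivial (H →L[ℂ] H) := ⟨⟨T, 0, h0⟩⟩
  have hspec : ‖T‖ ∈ spectrum ℝ T :=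
    CStarAlgebra.norm_mem_spectrum_of_nonneg ((nonneg_iff_isPositive T).mpr hT)
  rw [hc.hasEigenvalue_iff_mem_spectrum (by exact_mod_cast norm_ne_zero_iff.mpr h0)]
  exact (spectrum.algebraMap_mem_iff ℂ).mpr hspec

theorem IsCompactOperator.re_inner_lt_of_mem_orthogonal_eigenspanGE {T : H →L[ℂ] H}
    (hc : IsCompactOperator T) (hT : T.IsPositive) {e : ℝ} (he : 0 < e) {v : H}
    (hv : v ∈ (eigenspanGE (T : Module.End ℂ H) e)ᗮ) (hv0 : v ≠ 0) :
    re ⟪T v, v⟫_ℂ < e * ‖v‖ ^ 2 := by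
  set K := (eigenspanGE (T : Module.End ℂ H) e)ᗮ
  have hK : ∀ x ∈ K, T x ∈ K := hT.isSymmetric.orthogonalComplement_mem_invtSubmodule
    (eigenspanGE_mem_invtSubmodule _ e)
  set S : K →L[ℂ] K := T.restrict hK
  have hSc : IsCompactOperator S := hc.restrict' hK
  have hS : S.IsPositive := ⟨fun x y => hT.1 x y, fun x => hT.2 x⟩
  have hSe : ‖S‖ < e := by
    rcases eq_or_ne S 0 with hS0 | hS0
    · rwa [hS0, opNorm_zero]
    obtain ⟨w, hw⟩ := (hSc.hasEigenvalue_norm_of_isPositive hS hS0).exists_hasEigenvector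
    by_contra! heS
    have hTw : (w : H) ∈ eigenspanGE (T : Module.End ℂ H) e :=
      Submodule.mem_iSup_of_mem ⟨‖S‖, heS⟩ <| mem_eigenspace_iff.mpr <|
        congrArg Subtype.val hw.apply_eq_smul
    exact hw.2 (Subtype.ext ((Submodule.orthogonal_disjoint _).le_bot ⟨hTw, w.2⟩))
  have hvpos : 0 < ‖v‖ := norm_pos_iff.mpr hv0
  calc re ⟪T v, v⟫_ℂ = re ⟪S ⟨v, hv⟩, ⟨v, hv⟩⟫_ℂ := rfl
    _ ≤ ‖S ⟨v, hv⟩‖ * ‖v‖ := re_inner_le_norm _ _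
    _ ≤ ‖S‖ * ‖v‖ * ‖v‖ := by gcongr; exact S.le_opNorm _
    _ < e * ‖v‖ ^ 2 := by rw [mul_assoc, ← sq]; gcongr

theorem IsCompactOperator.disjoint_eigenspanGE_add_orthogonal_sup {X₁ X₂ : H →L[ℂ] H}
    (hc₁ : IsCompactOperator X₁) (hc₂ : IsCompactOperator X₂) (hX₁ : X₁.IsPositive)
    (hX₂ : X₂.IsPositive) {e₁ e₂ : ℝ} (he₁ : 0 < e₁) (he₂ : 0 < e₂) :
    Disjoint (eigenspanGE ((X₁ + X₂ : H →L[ℂ] H) : Module.End ℂ H) (e₁ + e₂))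
      (eigenspanGE (X₁ : Module.End ℂ H) e₁ ⊔ eigenspanGE (X₂ : Module.End ℂ H) e₂)ᗮ := by
  rw [← Submodule.inf_orthogonal, Submodule.disjoint_def]
  rintro z hz ⟨hz₁, hz₂⟩
  by_contra hz0
  have hlower := (hX₁.add hX₂).isSymmetric.mul_sq_norm_le_re_inner_of_mem_eigenspanGE hz
  have h₁ := hc₁.re_inner_lt_of_mem_orthogonal_eigenspanGE hX₁ he₁ hz₁ hz0
  have h₂ := hc₂.re_inner_lt_of_mem_orthogonal_eigenspanGE hX₂ he₂ hz₂ hz0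
  rw [coe_coe, add_apply, inner_add_left, map_add] at hlower
  linarith

end Positive

/-- For nonnegative compact self-adjoint operators `X₁, X₂` and
positive reals `e₁, e₂`, one has `n(X₁ + X₂, e₁ + e₂) ≤ n(X₁, e₁) + n(X₂, e₂)`. -/
theorem stmt2 {H : Type*} [NormedAddCommGroup H] [InnerProductSpace ℂ H] [CompleteSpace H]
    (X₁ X₂ : H →L[ℂ] H) (e₁ e₂ : ℝ) (he₁ : 0 < e₁) (he₂ : 0 < e₂)
    (hX₁ : X₁.IsPositive) (hX₂ : X₂.IsPositive)
    (hc₁ : IsCompactOperator (⇑X₁)) (hc₂ : IsCompactOperator (⇑X₂)) :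
    eigCount (X₁ + X₂) (e₁ + e₂) ≤ eigCount X₁ e₁ + eigCount X₂ e₂ := by
  have := hc₁.finiteDimensional_eigenspanGE hX₁.isSymmetric he₁
  have := hc₂.finiteDimensional_eigenspanGE hX₂.isSymmetric he₂
  simp only [eigCount_eq_rank_eigenspanGE]
  calc _ ≤ Module.rank ℂ ↥(eigenspanGE (X₁ : Module.End ℂ H) e₁ ⊔
        eigenspanGE (X₂ : Module.End ℂ H) e₂) :=
        Submodule.rank_le_of_disjoint_of_isCompl
          (hc₁.disjoint_eigenspanGE_add_orthogonal_sup hc₂ hX₁ hX₂ he₁ he₂)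
          (Submodule.isCompl_orthogonal _)
    _ ≤ _ := Submodule.rank_add_le_rank_add_rank _ _
end

section
/- For a nonnegative compact self-adjoint operator B and a bounded operator A on a Hilbert space, and any e > 0, the number of eigenvalues ≥ e of A B A* equals the number of eigenvalues ≥ e of B^{1/2} A* A B^{1/2}. -/
/-! `f g` and `g f` have the same nonzero eigenvalues with the same multiplicities: `g` maps the
`μ`-eigenspace of `f g` injectively into that of `g f`, since `f (g x) = μ x` recovers `x`
from `g x` when `μ ≠ 0`. With `f = A S`, `g = S A*` and `S² = B` this gives the theorem. -/

open ContinuousLinearMap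

namespace Module.End

universe u v w

variable {K : Type u} {V : Type v} {W : Type w} [Field K]
  [AddCommGroup V] [Module K V] [AddCommGroup W] [Module K W]

theorem mapsTo_eigenspace_comp (f : V →ₗ[K] W) (g : W →ₗ[K] V) (μ : K) :
    Set.MapsTo g (eigenspace (f ∘ₗ g) μ) (eigenspace (g ∘ₗ f) μ) := fun x hx => by
  rw [SetLike.mem_coe, mem_eigenspace_iff] at hx ⊢
  rw [LinearMap.comp_apply, ← LinearMap.comp_apply f g, hx, map_smul]

theorem injOn_eigenspace_comp (f : V →ₗ[K] W) (g : W →ₗ[K] V) {μ : K} (hμ : μ ≠ 0) :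
    Set.InjOn g (eigenspace (f ∘ₗ g) μ) := fun x hx y hy hxy => by
  rw [SetLike.mem_coe, mem_eigenspace_iff, LinearMap.comp_apply] at hx hy
  exact smul_right_injective W hμ (show μ • x = μ • y by rw [← hx, ← hy, hxy])

theorem lift_rank_eigenspace_comp_le (f : V →ₗ[K] W) (g : W →ₗ[K] V) {μ : K} (hμ : μ ≠ 0) :
    Cardinal.lift.{v} (Module.rank K (eigenspace (f ∘ₗ g) μ)) ≤
      Cardinal.lift.{w} (Module.rank K (eigenspace (g ∘ₗ f) μ)) := by
  refine LinearMap.lift_rank_le_of_injective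
    (g.restrict (mapsTo_eigenspace_comp f g μ)) fun x y hxy => ?_
  exact Subtype.ext (injOn_eigenspace_comp f g hμ x.2 y.2 (congrArg Subtype.val hxy))

theorem lift_rank_eigenspace_comp_eq (f : V →ₗ[K] W) (g : W →ₗ[K] V) {μ : K} (hμ : μ ≠ 0) :
    Cardinal.lift.{v} (Module.rank K (eigenspace (f ∘ₗ g) μ)) =
      Cardinal.lift.{w} (Module.rank K (eigenspace (g ∘ₗ f) μ)) :=
  (lift_rank_eigenspace_comp_le f g hμ).antisymm (lift_rank_eigenspace_comp_le g f hμ)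

end Module.End

theorem eigCount_comp_comm {H : Type*} [NormedAddCommGroup H] [InnerProductSpace ℂ H]
    (f g : H →L[ℂ] H) {μ : ℝ} (hμ : 0 < μ) : eigCount (f ∘L g) μ = eigCount (g ∘L f) μ := by
  refine congrArg Cardinal.sum (funext fun r => ?_)
  have hr : ((r : ℝ) : ℂ) ≠ 0 := Complex.ofReal_ne_zero.mpr (hμ.trans_le r.2).ne'
  have := Module.End.lift_rank_eigenspace_comp_eq (f : H →ₗ[ℂ] H) g hr
  rwa [Cardinal.lift_id, Cardinal.lift_id] at this

theorem stmt4_general {H : Type*} [NormedAddCommGroup H] [InnerProductSpace ℂ H] [CompleteSpace H]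
    (A B S : H →L[ℂ] H) (e : ℝ) (he : 0 < e)
    (hS2 : S ∘L S = B) :
    eigCount (A ∘L B ∘L adjoint A) e = eigCount (S ∘L adjoint A ∘L A ∘L S) e := by
  have hABA : A ∘L B ∘L adjoint A = (A ∘L S) ∘L (S ∘L adjoint A) := by
    rw [← hS2]; rfl
  rw [hABA, eigCount_comp_comm _ _ he]
  rfl

/-- For a nonnegative compact self-adjoint operator `B`
(with nonnegative square root `S`, `S² = B`), a bounded operator `A`, and `e > 0`,
`n(A B A*, e) = n(B^{1/2} A* A B^{1/2}, e)`. -/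
theorem stmt4 {H : Type*} [NormedAddCommGroup H] [InnerProductSpace ℂ H] [CompleteSpace H]
    (A B S : H →L[ℂ] H) (e : ℝ) (he : 0 < e)
    (hB : B.IsPositive) (hcB : IsCompactOperator (⇑B))
    (hS : S.IsPositive) (hS2 : S ∘L S = B) :
    eigCount (A ∘L B ∘L adjoint A) e = eigCount (S ∘L adjoint A ∘L A ∘L S) e :=
  stmt4_general A B S e he hS2
end

section
/- Let a countable index set I carry an asymmetric integer distance d_{ij} (defined via iterated ball neighborhoods) satisfying d_{ii} = 0, the triangle inequality d_{ij} + d_{jk} ≥ d_{ik}, d_{ij} = 0 ⇒ d_{ji} ≤ 1, and the property that if d_{ij} = d+1 then there exist m, a with d_{im} ≤ d, d_{ja} ≤ 3 and d_{am} ≤ 3. Then d_{ji} ≤ 7 d_{ij} + 1 for all i, j. -/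
/-- An asymmetric integer distance `d` on an index set `I` satisfying
`d i i = 0`, the triangle inequality, `d i j = 0 → d j i ≤ 1`, and the step property
(if `d i j = n + 1` there are `m, a` with `d i m ≤ n`, `d j a ≤ 3`, `d a m ≤ 3`)
obeys `d j i ≤ 7 d i j + 1` for all `i, j`. -/
theorem stmt8 {I : Type*} (d : I → I → ℕ)
    (h0 : ∀ i, d i i = 0)
    (htri : ∀ i j k, d i k ≤ d i j + d j k)
    (hsym0 : ∀ i j, d i j = 0 → d j i ≤ 1)
    (hstep : ∀ i j n, d i j = n + 1 → ∃ m a, d i m ≤ n ∧ d j a ≤ 3 ∧ d a m ≤ 3) :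
    ∀ i j, d j i ≤ 7 * d i j + 1 := by
  have key : ∀ n, ∀ i j, d i j = n → d j i ≤ 7 * n + 1 := by
    intro n
    induction n using Nat.strong_induction_on with
    | _ n ih =>
      intro i j hij
      match n, hij with
      | 0, hij => simpa using hsym0 i j hij
      | (m+1), hij =>
        obtain ⟨p, a, hip, hja, hap⟩ := hstep i j m hij
        have hpi : d p i ≤ 7 * d i p + 1 := ih (d i p) (by omega) i p rfl
        have h1 := htri j a p
        have h2 := htri j p i
        omega
  intro i j; exact key (d i j) i j rfl
end

section
/- For self-adjoint operators A, B on a Hilbert space, the anticommutator identity A²B² + B²A² = [AB²A + AB[A,B] + [B,A]BA + ½([A,[A,B]]B + B[[B,A],A])] + [the same expression with A and B interchanged] holds. Consequently, for any sufficiently large universal constant c, A²B² + B²A² ≥ ½(AB²A + BA²B − A² − B²) − c[A,B][B,A] − c[A,[A,B]][[B,A],A] − c[B,[B,A]][[A,B],B]. -/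
/-!
The identity holds in every ring in which `2` is invertible. Its right-hand side consists of
`AB²A + BA²B` and of summands of the form `XY + Y*X*`, namely `X = AB, Y = [A,B]` and
`X = [A,[A,B]], Y = B` together with their `A ↔ B` mirrors. Expanding
`0 ≤ (t X* + Y)*(t X* + Y)` gives the Schwarz bound `XY + Y*X* ≥ -(t XX* + t⁻¹ Y*Y)`; with
`t = ½` for the first pair and `t = 1` for the second this yields the lower bound with `c = 4`,
and larger `c` only subtract further positive operators `ZZ*`.
-/

open ContinuousLinearMap

/-- Commutator `[A, B] = AB − BA` of bounded operators. -/
def opComm {H : Type*} [NormedAddCommGroup H] [InnerProductSpace ℂ H]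
    (A B : H →L[ℂ] H) : H →L[ℂ] H := A * B - B * A

section Identity

variable {𝕜 R : Type*} [Field 𝕜] [Ring R] [Module 𝕜 R]

variable (𝕜) in
def sqMulSqHalf (a b : R) : R :=
  a * b ^ 2 * a + a * b * ⁅a, b⁆ + ⁅b, a⁆ * b * a
    + (1 / 2 : 𝕜) • (⁅a, ⁅a, b⁆⁆ * b + b * ⁅⁅b, a⁆, a⁆)

theorem sq_mul_sq_add_sq_mul_sq [NeZero (2 : 𝕜)] (a b : R) :
    a ^ 2 * b ^ 2 + b ^ 2 * a ^ 2 = sqMulSqHalf 𝕜 a b + sqMulSqHalf 𝕜 b a := by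
  have h : (2 : 𝕜) • (a ^ 2 * b ^ 2 + b ^ 2 * a ^ 2) =
      (2 : 𝕜) • (a * b ^ 2 * a + a * b * ⁅a, b⁆ + ⁅b, a⁆ * b * a
        + b * a ^ 2 * b + b * a * ⁅b, a⁆ + ⁅a, b⁆ * a * b)
      + (⁅a, ⁅a, b⁆⁆ * b + b * ⁅⁅b, a⁆, a⁆ + ⁅b, ⁅b, a⁆⁆ * a + a * ⁅⁅a, b⁆, b⁆) := by
    simp only [two_smul, Ring.lie_def]
    noncomm_ring
  apply smul_right_injective R (two_ne_zero' 𝕜)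
  simp only [sqMulSqHalf, smul_add, smul_smul, mul_one_div_cancel (two_ne_zero' 𝕜), one_smul, h]
  abel

end Identity

theorem lie_mul_lie_comm {R : Type*} [Ring R] (a b : R) : ⁅b, a⁆ * ⁅a, b⁆ = ⁅a, b⁆ * ⁅b, a⁆ := by
  simp only [Ring.lie_def]
  noncomm_ring

theorem star_lie {R : Type*} [Ring R] [StarRing R] (a b : R) :
    star ⁅a, b⁆ = ⁅star b, star a⁆ := by
  simp only [Ring.lie_def, star_sub, star_mul]

open scoped ComplexOrder

section StarOrderedAlgebra

variable {R : Type*} [Ring R] [StarRing R] [PartialOrder R] [StarOrderedRing R]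
  [Algebra ℂ R] [StarModule ℂ R]

theorem neg_le_mul_add_star_mul_star {t : ℝ} (ht : 0 < t) (x y : R) :
    -((t : ℂ) • (x * star x) + (t⁻¹ : ℂ) • (star y * y)) ≤ x * y + star y * star x := by
  have ht' : (t : ℂ) ≠ 0 := by exact_mod_cast ht.ne'
  have hsq := smul_nonneg (Complex.zero_le_real.mpr (inv_nonneg.mpr ht.le))
    (star_mul_self_nonneg ((t : ℂ) • star x + y))
  rw [← sub_nonneg, sub_neg_eq_add]
  convert hsq using 1
  simp only [star_add, star_smul, Complex.star_def, Complex.conj_ofReal, star_star, add_mul,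
    mul_add, smul_mul_assoc, mul_smul_comm, smul_add, smul_smul, Complex.ofReal_inv]
  field_simp
  module

theorem le_sqMulSqHalf {a b : R} (ha : IsSelfAdjoint a) (hb : IsSelfAdjoint b) :
    (1 / 2 : ℂ) • (a * b ^ 2 * a - b ^ 2) - (2 : ℂ) • (⁅b, a⁆ * ⁅a, b⁆)
      - (1 / 2 : ℂ) • (⁅a, ⁅a, b⁆⁆ * ⁅⁅b, a⁆, a⁆) ≤ sqMulSqHalf ℂ a b := by
  have h₁ := neg_le_mul_add_star_mul_star (t := 1 / 2) (by norm_num) (a * b) ⁅a, b⁆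
  have h₂ := neg_le_mul_add_star_mul_star one_pos ⁅a, ⁅a, b⁆⁆ b
  simp only [star_mul, star_lie, ha.star_eq, hb.star_eq] at h₁ h₂
  push_cast at h₁ h₂
  rw [← sub_nonneg]
  convert add_nonneg (sub_nonneg.mpr h₁) (smul_nonneg (by positivity : (0 : ℂ) ≤ 1 / 2)
    (sub_nonneg.mpr h₂)) using 1
  simp only [sqMulSqHalf, sq, mul_assoc]
  module

theorem le_sq_mul_sq_add_sq_mul_sq {a b : R} (ha : IsSelfAdjoint a) (hb : IsSelfAdjoint b)
    {c : ℝ} (hc : 4 ≤ c) :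
    (1 / 2 : ℂ) • (a * b ^ 2 * a + b * a ^ 2 * b - a ^ 2 - b ^ 2)
      - (c : ℂ) • (⁅a, b⁆ * ⁅b, a⁆)
      - (c : ℂ) • (⁅a, ⁅a, b⁆⁆ * ⁅⁅b, a⁆, a⁆)
      - (c : ℂ) • (⁅b, ⁅b, a⁆⁆ * ⁅⁅a, b⁆, b⁆) ≤ a ^ 2 * b ^ 2 + b ^ 2 * a ^ 2 := by
  have hc₄ : (0 : ℂ) ≤ c - 4 := by rw [sub_nonneg]; exact_mod_cast hc
  have hc₁ : (0 : ℂ) ≤ c - 1 / 2 := by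
    rw [sub_nonneg, ← Complex.ofReal_ofNat, ← Complex.ofReal_one, ← Complex.ofReal_div]
    exact Complex.real_le_real.mpr (by linarith)
  have hK₁ : 0 ≤ ⁅a, ⁅a, b⁆⁆ * ⁅⁅b, a⁆, a⁆ := by
    simpa only [star_lie, ha.star_eq, hb.star_eq] using mul_star_self_nonneg ⁅a, ⁅a, b⁆⁆
  have hK₂ : 0 ≤ ⁅b, ⁅b, a⁆⁆ * ⁅⁅a, b⁆, b⁆ := by
    simpa only [star_lie, ha.star_eq, hb.star_eq] using mul_star_self_nonneg ⁅b, ⁅b, a⁆⁆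
  have hC : 0 ≤ ⁅a, b⁆ * ⁅b, a⁆ := by
    simpa only [star_lie, ha.star_eq, hb.star_eq] using mul_star_self_nonneg ⁅a, b⁆
  have hab := le_sqMulSqHalf ha hb
  rw [lie_mul_lie_comm] at hab
  have hba := le_sqMulSqHalf hb ha
  rw [sq_mul_sq_add_sq_mul_sq (𝕜 := ℂ), ← sub_nonneg]
  convert add_nonneg (add_nonneg (add_nonneg (add_nonneg (sub_nonneg.mpr hab)
    (sub_nonneg.mpr hba)) (smul_nonneg hc₄ hC)) (smul_nonneg hc₁ hK₁)) (smul_nonneg hc₁ hK₂)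
    using 1
  module

end StarOrderedAlgebra

/-- For bounded self-adjoint `A, B` the anticommutator identity
`A²B² + B²A² = [AB²A + AB[A,B] + [B,A]BA + ½([A,[A,B]]B + B[[B,A],A])] + (A ↔ B)`
holds; consequently, for every sufficiently large universal constant `c`,
`A²B² + B²A² ≥ ½(AB²A + BA²B − A² − B²) − c[A,B][B,A] − c[A,[A,B]][[B,A],A]
  − c[B,[B,A]][[A,B],B]`. -/
theorem stmt13 {H : Type*} [NormedAddCommGroup H] [InnerProductSpace ℂ H]
    [CompleteSpace H] :
    (∀ A B : H →L[ℂ] H, IsSelfAdjoint A → IsSelfAdjoint B →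
      A ^ 2 * B ^ 2 + B ^ 2 * A ^ 2 =
        (A * B ^ 2 * A + A * B * opComm A B + opComm B A * B * A
          + ((1 : ℂ) / 2) • (opComm A (opComm A B) * B + B * opComm (opComm B A) A))
        + (B * A ^ 2 * B + B * A * opComm B A + opComm A B * A * B
          + ((1 : ℂ) / 2) • (opComm B (opComm B A) * A + A * opComm (opComm A B) B))) ∧
    ∃ c₀ : ℝ, ∀ c : ℝ, c₀ ≤ c → ∀ A B : H →L[ℂ] H,
      IsSelfAdjoint A → IsSelfAdjoint B →
      ((A ^ 2 * B ^ 2 + B ^ 2 * A ^ 2) -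
        (((1 : ℂ) / 2) • (A * B ^ 2 * A + B * A ^ 2 * B - A ^ 2 - B ^ 2)
          - (c : ℂ) • (opComm A B * opComm B A)
          - (c : ℂ) • (opComm A (opComm A B) * opComm (opComm B A) A)
          - (c : ℂ) • (opComm B (opComm B A) * opComm (opComm A B) B))).IsPositive :=
  -- `opComm A B` unfolds definitionally to the ring commutator `⁅A, B⁆`.
  ⟨fun A B _ _ ↦ sq_mul_sq_add_sq_mul_sq A B,
    ⟨4, fun _ hc _ _ hA hB ↦ (le_def _ _).mp (le_sq_mul_sq_add_sq_mul_sq hA hB hc)⟩⟩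
end

section
/- Let A = 𝒜·∇ + ℬ be a first-order differential operator on L²(ℝ³)^k with smooth coefficients and sup_x ‖𝒜(x)‖ ≤ c₀, and let T = A*A, P a positive bounded function, μ ≥ 0, R = (T + P + μ)^{-1}. For any smooth real function χ, ‖R^{1/2} [T, χ] R^{1/2}‖ ≤ 2 c₀ ‖P^{-1/2}|∇χ|‖_∞. -/
/-!
Put `C = [A, X]`. Since `X` is self-adjoint, `[A*A, X] = A*C - C*A`, hence
`S [T, X] S = (AS)*(CS) - (CS)*(AS)` and its norm is at most `2 ‖AS‖ ‖CS‖`.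
All remaining estimates come from `‖a s‖² = ‖s* (a*a) s‖` and the monotonicity of the norm on
positive elements of a C⋆-algebra:
* `A*A ≤ Q := T + P + μ` and `S Q S = 1` give `‖AS‖ ≤ 1`;
* `[A*, X] = -C*`, so the second pointwise bound reads `C*C ≤ c₀² G²`, giving `‖CS‖ ≤ c₀ ‖GS‖`;
* `P ≤ Q` gives `S² = Q⁻¹ ≤ P⁻¹ = Pinvhalf²`, hence `‖GS‖ = ‖SG‖ ≤ ‖Pinvhalf G‖`.
-/

theorem star_mul_self_mul_eq {R : Type*} [Semigroup R] [StarMul R] (a s : R) :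
    star (a * s) * (a * s) = star s * (star a * a) * s := by
  simp only [star_mul, mul_assoc]

theorem Units.mul_mul_eq_one_of_mul_self_eq_inv {M : Type*} [Monoid M] {s : M} {u : Mˣ}
    (hs : s * s = ↑u⁻¹) : s * u * s = 1 := by
  have hsu : Commute s u :=
    Commute.units_inv_right_iff.mp (hs ▸ (Commute.refl s).mul_right (Commute.refl s))
  rw [hsu.eq, mul_assoc, hs, u.mul_inv]

theorem conj_commutator_star_mul_self {R : Type*} [NonUnitalRing R] [StarRing R] {a x s : R}
    (hx : IsSelfAdjoint x) (hs : IsSelfAdjoint s) :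
    s * (star a * a * x - x * (star a * a)) * s
      = star (a * s) * ((a * x - x * a) * s) - star ((a * x - x * a) * s) * (a * s) := by
  simp only [star_mul, star_sub, hx.star_eq, hs.star_eq]
  noncomm_ring

section NormedStarRing

variable {R : Type*} [NonUnitalNormedRing R] [StarRing R] [NormedStarGroup R]

theorem norm_star_mul_sub_star_mul_le (y z : R) :
    ‖star y * z - star z * y‖ ≤ 2 * ‖y‖ * ‖z‖ :=
  calc ‖star y * z - star z * y‖ ≤ ‖star y * z‖ + ‖star z * y‖ := norm_sub_le _ _
    _ ≤ ‖star y‖ * ‖z‖ + ‖star z‖ * ‖y‖ := add_le_add (norm_mul_le _ _) (norm_mul_le _ _)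
    _ = 2 * ‖y‖ * ‖z‖ := by rw [norm_star, norm_star]; ring

theorem norm_conj_commutator_star_mul_self_le {a x s : R}
    (hx : IsSelfAdjoint x) (hs : IsSelfAdjoint s) :
    ‖s * (star a * a * x - x * (star a * a)) * s‖ ≤ 2 * ‖a * s‖ * ‖(a * x - x * a) * s‖ := by
  rw [conj_commutator_star_mul_self hx hs]
  exact norm_star_mul_sub_star_mul_le _ _

end NormedStarRing

section NonUnitalCStarAlgebra

variable {A : Type*} [NonUnitalCStarAlgebra A] [PartialOrder A] [StarOrderedRing A]

theorem sq_norm_mul_le_of_star_mul_self_le {a b : A} (h : star a * a ≤ b) (s : A) :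
    ‖a * s‖ ^ 2 ≤ ‖star s * b * s‖ := by
  rw [sq, ← CStarRing.norm_star_mul_self, star_mul_self_mul_eq]
  exact CStarAlgebra.norm_le_norm_of_nonneg_of_le
    (star_left_conjugate_nonneg (star_mul_self_nonneg a) s) (star_left_conjugate_le_conjugate h s)

theorem norm_mul_le_norm_mul_of_star_mul_self_le {a b : A} (h : star a * a ≤ star b * b)
    (s : A) : ‖a * s‖ ≤ ‖b * s‖ := by
  have h' := sq_norm_mul_le_of_star_mul_self_le h s
  rwa [← star_mul_self_mul_eq, CStarRing.norm_star_mul_self, ← sq,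
    pow_le_pow_iff_left₀ (norm_nonneg _) (norm_nonneg _) two_ne_zero] at h'

theorem norm_mul_le_mul_norm_mul_of_star_mul_self_le_smul {a g : A} {c : ℝ} (hc : 0 ≤ c)
    (hg : IsSelfAdjoint g) (h : star a * a ≤ ((c ^ 2 : ℝ) : ℂ) • (g * g)) (s : A) :
    ‖a * s‖ ≤ c * ‖g * s‖ := by
  have hcg : star ((c : ℂ) • g) * ((c : ℂ) • g) = ((c ^ 2 : ℝ) : ℂ) • (g * g) := by
    rw [star_smul, hg.star_eq, Complex.star_def, Complex.conj_ofReal, smul_mul_smul_comm,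
      Complex.ofReal_pow, sq]
  calc ‖a * s‖ ≤ ‖(c : ℂ) • g * s‖ := norm_mul_le_norm_mul_of_star_mul_self_le (hcg ▸ h) s
    _ = c * ‖g * s‖ := by rw [smul_mul_assoc, norm_smul, Complex.norm_of_nonneg hc]

end NonUnitalCStarAlgebra

section CStarAlgebra

variable {A : Type*} [CStarAlgebra A] [PartialOrder A] [StarOrderedRing A]

theorem norm_mul_le_one_of_star_mul_self_le {a q s : A} (h : star a * a ≤ q)
    (hs : star s * q * s = 1) : ‖a * s‖ ≤ 1 := by
  have h' := sq_norm_mul_le_of_star_mul_self_le h s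
  rw [hs] at h'
  have h1 : ‖(1 : A)‖ ≤ 1 := (CStarAlgebra.norm_le_one_iff_of_nonneg 1 zero_le_one).mpr le_rfl
  exact (sq_le_one_iff₀ (norm_nonneg _)).mp (h'.trans h1)

theorem norm_mul_le_norm_mul_of_mul_self_eq_inv {p q : Aˣ} {s b : A} (hp : 0 ≤ (p : A))
    (hpq : (p : A) ≤ q) (hs : IsSelfAdjoint s) (hb : IsSelfAdjoint b) (hsq : s * s = ↑q⁻¹)
    (hbp : b * b = ↑p⁻¹) (g : A) : ‖s * g‖ ≤ ‖b * g‖ := by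
  refine norm_mul_le_norm_mul_of_star_mul_self_le ?_ g
  rw [hs.star_eq, hb.star_eq, hsq, hbp]
  exact CStarAlgebra.inv_le_inv hp hpq

theorem CStarAlgebra.norm_conj_commutator_star_mul_self_le_two_mul {a x g b s : A} {p q : Aˣ}
    {c : ℝ} (hc : 0 ≤ c) (hx : IsSelfAdjoint x) (hg : IsSelfAdjoint g) (hb : IsSelfAdjoint b)
    (hs : IsSelfAdjoint s) (hp : 0 ≤ (p : A)) (hpq : (p : A) ≤ q) (haq : star a * a ≤ q)
    (hsq : s * s = ↑q⁻¹) (hbp : b * b = ↑p⁻¹)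
    (hcomm : star (a * x - x * a) * (a * x - x * a) ≤ ((c ^ 2 : ℝ) : ℂ) • (g * g)) :
    ‖s * (star a * a * x - x * (star a * a)) * s‖ ≤ 2 * c * ‖b * g‖ := by
  have has : ‖a * s‖ ≤ 1 := by
    refine norm_mul_le_one_of_star_mul_self_le haq ?_
    rw [hs.star_eq]
    exact Units.mul_mul_eq_one_of_mul_self_eq_inv hsq
  have hgs : ‖star (g * s)‖ ≤ ‖b * g‖ := by
    rw [star_mul, hs.star_eq, hg.star_eq]
    exact norm_mul_le_norm_mul_of_mul_self_eq_inv hp hpq hs hb hsq hbp g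
  calc ‖s * (star a * a * x - x * (star a * a)) * s‖ ≤ 2 * ‖a * s‖ * ‖(a * x - x * a) * s‖ :=
        norm_conj_commutator_star_mul_self_le hx hs
    _ ≤ 2 * 1 * (c * ‖g * s‖) := by
        gcongr
        exact norm_mul_le_mul_norm_mul_of_star_mul_self_le_smul hc hg hcomm s
    _ = 2 * c * ‖star (g * s)‖ := by rw [norm_star]; ring
    _ ≤ 2 * c * ‖b * g‖ := by gcongr

end CStarAlgebra

open ContinuousLinearMap

theorem stmt15_general {H : Type*} [NormedAddCommGroup H] [InnerProductSpace ℂ H] [CompleteSpace H]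
    (c₀ μ : ℝ) (hc₀ : 0 ≤ c₀) (hμ : 0 ≤ μ)
    (A T P R S G Pinvhalf X : H →L[ℂ] H)
    (hT : T = adjoint A ∘L A)
    (hX : IsSelfAdjoint X)
    (hP : P.IsPositive) (hG : G.IsPositive)
    (hcomm2 : (((c₀ ^ 2 : ℝ) : ℂ) • (G ∘L G)
      - (adjoint A ∘L X - X ∘L adjoint A) ∘L
          adjoint (adjoint A ∘L X - X ∘L adjoint A)).IsPositive)
    (hR1 : (T + P + ((μ : ℝ) : ℂ) • 1) ∘L R = 1)
    (hR2 : R ∘L (T + P + ((μ : ℝ) : ℂ) • 1) = 1)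
    (hS : S.IsPositive) (hS2 : S ∘L S = R)
    (hPi : Pinvhalf.IsPositive)
    (hPiP : Pinvhalf ∘L Pinvhalf ∘L P = 1) (hPPi : P ∘L Pinvhalf ∘L Pinvhalf = 1) :
    ‖S ∘L (T ∘L X - X ∘L T) ∘L S‖ ≤ 2 * c₀ * ‖Pinvhalf ∘L G‖ := by
  set Q := T + P + ((μ : ℝ) : ℂ) • 1
  set C := A * X - X * A
  have hT' : T = star A * A := by rw [hT, star_eq_adjoint]; rfl
  have hP0 : 0 ≤ P := (nonneg_iff_isPositive P).mpr hP
  have hμ1 : 0 ≤ ((μ : ℝ) : ℂ) • (1 : H →L[ℂ] H) :=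
    (nonneg_iff_isPositive _).mpr (isPositive_one.smul_of_nonneg (by exact_mod_cast hμ))
  have hTQ : star A * A ≤ Q := hT' ▸ le_add_of_le_of_nonneg (le_add_of_nonneg_right hP0) hμ1
  have hPQ : P ≤ Q :=
    le_add_of_le_of_nonneg (le_add_of_nonneg_left (hT' ▸ star_mul_self_nonneg A)) hμ1
  have hCC : star C * C ≤ ((c₀ ^ 2 : ℝ) : ℂ) • (G * G) := by
    have hD : star A * X - X * star A = -star C := by
      simp only [C, star_sub, star_mul, hX.star_eq, neg_sub]
    have h : (star A * X - X * star A) * star (star A * X - X * star A)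
        ≤ ((c₀ ^ 2 : ℝ) : ℂ) • (G * G) := (le_def _ _).mpr hcomm2
    rwa [hD, star_neg, star_star, neg_mul_neg] at h
  have key := CStarAlgebra.norm_conj_commutator_star_mul_self_le_two_mul
    (p := ⟨P, Pinvhalf * Pinvhalf, hPPi, hPiP⟩) (q := ⟨Q, R, hR1, hR2⟩) hc₀ hX
    hG.isSelfAdjoint hPi.isSelfAdjoint hS.isSelfAdjoint hP0 hPQ hTQ hS2 rfl hCC
  rwa [← hT'] at key

/-- Abstract form of the commutator bound
`‖R^{1/2} [T, χ] R^{1/2}‖ ≤ 2 c₀ ‖P^{-1/2} |∇χ|‖_∞` for `T = A*A`,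
`R = (T + P + μ)⁻¹`. Here `X` stands for multiplication by the real function `χ`,
`G` for multiplication by `|∇χ|`, `Pinvhalf` for multiplication by `P^{-1/2}`
(so `Pinvhalf² P = P Pinvhalf² = 1` and `Pinvhalf` commutes with `G`), and the pointwise
bounds `[A,χ][A,χ]* ≤ c₀²|∇χ|²`, `[A*,χ][A*,χ]* ≤ c₀²|∇χ|²` coming from
`sup ‖𝒜(x)‖ ≤ c₀` are taken as hypotheses. The operator norm
`‖P^{-1/2}|∇χ|‖_∞` is `‖Pinvhalf ∘L G‖`. -/
theorem stmt15 {H : Type*} [NormedAddCommGroup H] [InnerProductSpace ℂ H] [CompleteSpace H]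
    (c₀ μ : ℝ) (hc₀ : 0 ≤ c₀) (hμ : 0 ≤ μ)
    (A T P R S G Pinvhalf X : H →L[ℂ] H)
    (hT : T = adjoint A ∘L A)
    (hX : IsSelfAdjoint X)
    (hP : P.IsPositive) (hG : G.IsPositive)
    (hcomm1 : (((c₀ ^ 2 : ℝ) : ℂ) • (G ∘L G)
      - (A ∘L X - X ∘L A) ∘L adjoint (A ∘L X - X ∘L A)).IsPositive)
    (hcomm2 : (((c₀ ^ 2 : ℝ) : ℂ) • (G ∘L G)
      - (adjoint A ∘L X - X ∘L adjoint A) ∘L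
          adjoint (adjoint A ∘L X - X ∘L adjoint A)).IsPositive)
    (hR1 : (T + P + ((μ : ℝ) : ℂ) • 1) ∘L R = 1)
    (hR2 : R ∘L (T + P + ((μ : ℝ) : ℂ) • 1) = 1)
    (hS : S.IsPositive) (hS2 : S ∘L S = R)
    (hPi : Pinvhalf.IsPositive)
    (hPiP : Pinvhalf ∘L Pinvhalf ∘L P = 1) (hPPi : P ∘L Pinvhalf ∘L Pinvhalf = 1)
    (hPcomm : Pinvhalf ∘L G = G ∘L Pinvhalf) :
    ‖S ∘L (T ∘L X - X ∘L T) ∘L S‖ ≤ 2 * c₀ * ‖Pinvhalf ∘L G‖ :=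
  stmt15_general c₀ μ hc₀ hμ A T P R S G Pinvhalf X hT hX hP hG hcomm2 hR1 hR2 hS hS2 hPi hPiP hPPi
end
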